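/- Let φ, Q, λ > 0, u_γ > 1, set C = (u_γ − 1)/(u_γ + 1), and define u(s) = (C + exp(2λφ s/Q))/(exp(2λφ s/Q) − C) for s ≥ 0. Let 0 < δ < u_γ − 1 and define ε_μ = (Q/(2λφ))·ln(C(2+δ)/δ). Then ε_μ > 0, u(ε_μ) = 1 + δ, and ε_μ is the unique s ≥ 0 with u(s) = 1 + δ. -/
import Mathlib


/-- For the steady solution `u(s) = (C + exp(2λφ s/Q))/(exp(2λφ s/Q) − C)`,
`C = (u_γ − 1)/(u_γ + 1)`, `u_γ > 1`, and a cutoff `0 < δ < u_γ − 1`, the layer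
thickness `ε_μ = (Q/(2λφ))·ln(C(2+δ)/δ)` is positive, satisfies `u(ε_μ) = 1 + δ`,
and is the unique nonnegative point where `u` equals the cutoff value `1 + δ`. -/
theorem stmt_7 (φ Q lam uγ δ : ℝ) (hφ : 0 < φ) (hQ : 0 < Q) (hlam : 0 < lam)
    (huγ : 1 < uγ) (hδ : 0 < δ) (hδuγ : δ < uγ - 1)
    (C : ℝ) (hC : C = (uγ - 1) / (uγ + 1))
    (u : ℝ → ℝ)
    (hu : ∀ s : ℝ, u s =
      (C + Real.exp (2 * lam * φ * s / Q)) / (Real.exp (2 * lam * φ * s / Q) - C))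
    (εμ : ℝ) (hε : εμ = Q / (2 * lam * φ) * Real.log (C * (2 + δ) / δ)) :
    0 < εμ ∧ u εμ = 1 + δ ∧ ∀ s : ℝ, 0 ≤ s → u s = 1 + δ → s = εμ := by
  have huγ1 : (0:ℝ) < uγ + 1 := by linarith
  have hCpos : 0 < C := by rw [hC]; exact div_pos (by linarith) huγ1
  have hA : (1:ℝ) < C * (2 + δ) / δ := by
    rw [hC, lt_div_iff₀ hδ, one_mul, div_mul_eq_mul_div, lt_div_iff₀ huγ1]
    nlinarith
  have hApos : (0:ℝ) < C * (2 + δ) / δ := lt_trans one_pos hA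
  have hk : (0:ℝ) < 2 * lam * φ := by positivity
  have hεval : 2 * lam * φ * εμ / Q = Real.log (C * (2 + δ) / δ) := by
    rw [hε]; field_simp
  have hEε : Real.exp (2 * lam * φ * εμ / Q) = C * (2 + δ) / δ := by
    rw [hεval, Real.exp_log hApos]
  have hεpos : 0 < εμ := by
    rw [hε]
    have := Real.log_pos hA
    positivity
  have hC1 : C < 1 := by
    rw [hC, div_lt_one huγ1]; linarith
  have huval : u εμ = 1 + δ := by
    rw [hu, hEε]
    have hden : C * (2 + δ) / δ - C = 2 * C / δ := by
      field_simp; ring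
    rw [hden]
    have hnum : C + C * (2 + δ) / δ = (1 + δ) * (2 * C / δ) := by
      field_simp; ring
    rw [hnum]
    field_simp
  refine ⟨hεpos, huval, ?_⟩
  intro s hs hus
  set E := Real.exp (2 * lam * φ * s / Q) with hE
  have hE1 : 1 ≤ E := by
    rw [hE]
    have : 0 ≤ 2 * lam * φ * s / Q := by positivity
    simpa using Real.one_le_exp this
  have hden : 0 < E - C := by linarith
  rw [hu s] at hus
  rw [div_eq_iff (ne_of_gt hden)] at hus
  have hEeq : E = C * (2 + δ) / δ := by
    field_simp
    nlinarith
  have hexp : Real.exp (2 * lam * φ * s / Q) = Real.exp (2 * lam * φ * εμ / Q) := by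
    rw [hEε, ← hE, hEeq]
  have h1 := Real.exp_injective hexp
  have h2 : 2 * lam * φ * s = 2 * lam * φ * εμ := by
    have := congrArg (fun x => x * Q) h1
    simpa [div_mul_cancel₀, hQ.ne'] using this
  exact mul_left_cancel₀ (ne_of_gt hk) h2
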